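/- Let X be a quasi-median graph, Y a convex subgraph of X, and Z₁, …, Zₙ gated subgraphs of X. If the subgraphs Y, Z₁, …, Zₙ pairwise intersect, then their total intersection Y ∩ Z₁ ∩ ⋯ ∩ Zₙ is non-empty. -/

import Mathlib

open Filter Topology

namespace QM

variable {V : Type*}

/-- A quasi-median graph: connected, no induced `K₄⁻`, no induced `K_{3,2}`, and
satisfying the triangle and quadrangle conditions. -/
structure IsQuasiMedian (G : SimpleGraph V) : Prop where
  connected : G.Connected
  no_K4minus : ∀ a b c d : V, a ≠ d → G.Adj a b → G.Adj a c → G.Adj b c →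
    G.Adj b d → G.Adj c d → G.Adj a d
  no_K32 : ∀ x₁ x₂ x₃ y₁ y₂ : V, x₁ ≠ x₂ → x₁ ≠ x₃ → x₂ ≠ x₃ → y₁ ≠ y₂ →
    G.Adj x₁ y₁ → G.Adj x₁ y₂ → G.Adj x₂ y₁ → G.Adj x₂ y₂ → G.Adj x₃ y₁ → G.Adj x₃ y₂ →
    G.Adj x₁ x₂ ∨ G.Adj x₁ x₃ ∨ G.Adj x₂ x₃ ∨ G.Adj y₁ y₂
  triangle : ∀ a x y : V, G.Adj x y → G.dist a x = G.dist a y →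
    ∃ z, G.Adj x z ∧ G.Adj y z ∧ G.dist a z + 1 = G.dist a x
  quadrangle : ∀ a x y z : V, x ≠ y → G.Adj x z → G.Adj y z →
    G.dist a x = G.dist a y → G.dist a x + 1 = G.dist a z →
    ∃ w, G.Adj x w ∧ G.Adj y w ∧ G.dist a w + 2 = G.dist a z

/-- Two edges are elementarily related if they belong to a common triangle or are
opposite sides of a 4-cycle. -/
def EdgeRel (G : SimpleGraph V) (e f : Sym2 V) : Prop :=
  (∃ a b c : V, G.Adj a b ∧ G.Adj b c ∧ G.Adj a c ∧
    (e = s(a, b) ∨ e = s(b, c) ∨ e = s(a, c)) ∧ (f = s(a, b) ∨ f = s(b, c) ∨ f = s(a, c))) ∨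
  (∃ a b c d : V, G.Adj a b ∧ G.Adj b c ∧ G.Adj c d ∧ G.Adj d a ∧
    e = s(a, b) ∧ f = s(c, d))

/-- The hyperplane (equivalence class) of an edge. -/
def hyperplaneOf (G : SimpleGraph V) (e : Sym2 V) : Set (Sym2 V) :=
  {f | f ∈ G.edgeSet ∧ Relation.ReflTransGen (EdgeRel G) e f}

/-- A hyperplane is an equivalence class of edges. -/
def IsHyperplane (G : SimpleGraph V) (J : Set (Sym2 V)) : Prop :=
  ∃ e ∈ G.edgeSet, J = hyperplaneOf G e

/-- A sector delimited by the set of edges `J`: a connected component of the graph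
obtained by deleting the edges of `J`. -/
def IsSector (G : SimpleGraph V) (J : Set (Sym2 V)) (S : Set V) : Prop :=
  ∃ x : V, S = {y | (G.deleteEdges J).Reachable x y}

/-- `J` separates the vertices `x` and `y`: they lie in distinct sectors. -/
def SepVerts (G : SimpleGraph V) (J : Set (Sym2 V)) (x y : V) : Prop :=
  ¬ (G.deleteEdges J).Reachable x y

/-- `J` separates the sets `A` and `B`: each lies in a single sector, and these
sectors differ. -/
def SepSets (G : SimpleGraph V) (J : Set (Sym2 V)) (A B : Set V) : Prop :=
  (∀ a ∈ A, ∀ a' ∈ A, (G.deleteEdges J).Reachable a a') ∧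
  (∀ b ∈ B, ∀ b' ∈ B, (G.deleteEdges J).Reachable b b') ∧
  (∀ a ∈ A, ∀ b ∈ B, ¬ (G.deleteEdges J).Reachable a b)

/-- The carrier of a set of edges: all endpoints of its edges. -/
def carrier (J : Set (Sym2 V)) : Set V := {v | ∃ e ∈ J, v ∈ e}

/-- Two sets of edges are transverse if they contain two edges spanning a 4-cycle. -/
def Transverse (G : SimpleGraph V) (J₁ J₂ : Set (Sym2 V)) : Prop :=
  ∃ a b c d : V, G.Adj a b ∧ G.Adj b c ∧ G.Adj c d ∧ G.Adj d a ∧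
    ((s(a, b) ∈ J₁ ∧ s(b, c) ∈ J₂) ∨ (s(a, b) ∈ J₂ ∧ s(b, c) ∈ J₁))

/-- Two sets of edges are in contact if their carriers share a vertex. -/
def InContact (J₁ J₂ : Set (Sym2 V)) : Prop := (carrier J₁ ∩ carrier J₂).Nonempty

/-- The type of hyperplanes of `G`. -/
def Hyperplanes (G : SimpleGraph V) := {J : Set (Sym2 V) // IsHyperplane G J}

/-- The crossing graph: vertices are hyperplanes, adjacent when transverse. -/
def crossingGraph (G : SimpleGraph V) : SimpleGraph (Hyperplanes G) where
  Adj J K := J ≠ K ∧ Transverse G J.1 K.1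
  symm := ⟨by
    rintro J K ⟨hne, a, b, c, d, h1, h2, h3, h4, h5⟩
    exact ⟨hne.symm, a, b, c, d, h1, h2, h3, h4, h5.symm⟩⟩
  loopless := ⟨fun J h => h.1 rfl⟩

/-- The contact graph: vertices are hyperplanes, adjacent when in contact. -/
def contactGraph (G : SimpleGraph V) : SimpleGraph (Hyperplanes G) where
  Adj J K := J ≠ K ∧ InContact J.1 K.1
  symm := ⟨by
    rintro J K ⟨hne, x, hx1, hx2⟩
    exact ⟨hne.symm, x, hx2, hx1⟩⟩
  loopless := ⟨fun J h => h.1 rfl⟩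

/-- A permutation of the vertices is an automorphism (equivalently, for a connected
graph, an isometry) if it preserves adjacency. -/
def IsAut (G : SimpleGraph V) (g : Equiv.Perm V) : Prop :=
  ∀ x y : V, G.Adj (g x) (g y) ↔ G.Adj x y

lemma IsAut.symm {G : SimpleGraph V} {g : Equiv.Perm V} (hg : IsAut G g) : IsAut G g.symm := by
  intro x y
  conv_rhs => rw [← g.apply_symm_apply x, ← g.apply_symm_apply y]
  exact (hg _ _).symm

lemma edgeRel_map {G : SimpleGraph V} {g : Equiv.Perm V} (hg : IsAut G g)
    {e f : Sym2 V} (h : EdgeRel G e f) :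
    EdgeRel G (Sym2.map g e) (Sym2.map g f) := by
  rcases h with ⟨a, b, c, h1, h2, h3, he, hf⟩ | ⟨a, b, c, d, h1, h2, h3, h4, he, hf⟩
  · refine Or.inl ⟨g a, g b, g c, (hg a b).mpr h1, (hg b c).mpr h2, (hg a c).mpr h3, ?_, ?_⟩
    · rcases he with rfl | rfl | rfl <;> simp [Sym2.map_pair_eq]
    · rcases hf with rfl | rfl | rfl <;> simp [Sym2.map_pair_eq]
  · exact Or.inr ⟨g a, g b, g c, g d, (hg a b).mpr h1, (hg b c).mpr h2, (hg c d).mpr h3,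
      (hg d a).mpr h4, by simp [he, Sym2.map_pair_eq], by simp [hf, Sym2.map_pair_eq]⟩

lemma mem_edgeSet_map {G : SimpleGraph V} {g : Equiv.Perm V} (hg : IsAut G g)
    {e : Sym2 V} (he : e ∈ G.edgeSet) : Sym2.map g e ∈ G.edgeSet := by
  induction e using Sym2.ind with
  | _ x y =>
    rw [Sym2.map_pair_eq, SimpleGraph.mem_edgeSet] at *
    exact (hg x y).mpr he

lemma map_symm_map {g : Equiv.Perm V} (s : Sym2 V) :
    Sym2.map g (Sym2.map g.symm s) = s := by
  rw [Sym2.map_map]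
  simp

lemma isHyperplane_map {G : SimpleGraph V} {g : Equiv.Perm V} (hg : IsAut G g)
    {J : Set (Sym2 V)} (hJ : IsHyperplane G J) :
    IsHyperplane G (Sym2.map g '' J) := by
  obtain ⟨e, he, rfl⟩ := hJ
  refine ⟨Sym2.map g e, mem_edgeSet_map hg he, ?_⟩
  ext f
  constructor
  · rintro ⟨f', ⟨hf1, hf2⟩, rfl⟩
    exact ⟨mem_edgeSet_map hg hf1,
      hf2.lift (Sym2.map g) (fun a b h => edgeRel_map hg h)⟩
  · rintro ⟨hf1, hf2⟩
    refine ⟨Sym2.map g.symm f, ⟨mem_edgeSet_map hg.symm hf1, ?_⟩, map_symm_map f⟩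
    have : Relation.ReflTransGen (EdgeRel G) (Sym2.map g.symm (Sym2.map g e))
        (Sym2.map g.symm f) := hf2.lift (Sym2.map g.symm)
      (fun a b h => edgeRel_map hg.symm h)
    have h2 : Sym2.map g.symm (Sym2.map g e) = e := by
      rw [Sym2.map_map]; simp
    rwa [h2] at this

/-- The map induced on hyperplanes by an automorphism. -/
def hypMap (G : SimpleGraph V) {g : Equiv.Perm V} (hg : IsAut G g) :
    Hyperplanes G → Hyperplanes G :=
  fun J => ⟨Sym2.map g '' J.1, isHyperplane_map hg J.2⟩

/-- A bi-infinite geodesic in a graph: an isometric embedding of `ℤ`. -/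
def IsBiGeodesic {W : Type*} (H : SimpleGraph W) (γ : ℤ → W) : Prop :=
  ∀ m n : ℤ, H.dist (γ m) (γ n) = (m - n).natAbs

/-- An axis of a map `φ`: a bi-infinite geodesic on which `φ` acts as a translation
of positive length. -/
def IsAxisOf {W : Type*} (H : SimpleGraph W) (φ : W → W) (γ : ℤ → W) : Prop :=
  IsBiGeodesic H γ ∧ ∃ ℓ : ℕ, 1 ≤ ℓ ∧ ∀ n : ℤ, φ (γ n) = γ (n + ℓ)

/-- A set of vertices is convex if it contains every geodesic between two of its
vertices. -/
def ConvexSet (G : SimpleGraph V) (S : Set V) : Prop :=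
  ∀ x ∈ S, ∀ y ∈ S, ∀ p : G.Walk x y, p.length = G.dist x y → ∀ v ∈ p.support, v ∈ S

/-- The convex hull of a set of vertices. -/
def convexHullSet (G : SimpleGraph V) (S : Set V) : Set V :=
  ⋂₀ {T : Set V | ConvexSet G T ∧ S ⊆ T}

/-- `p` is a gate of `x` in `S`. -/
def IsGate (G : SimpleGraph V) (S : Set V) (x p : V) : Prop :=
  p ∈ S ∧ ∀ z ∈ S, G.dist x p + G.dist p z = G.dist x z

/-- A set of vertices is gated if every vertex admits a gate in it. -/
def Gated (G : SimpleGraph V) (S : Set V) : Prop :=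
  ∀ x : V, ∃ p : V, IsGate G S x p

/-- A maximal complete subgraph, viewed as a set of vertices. -/
def IsMaxClique (G : SimpleGraph V) (C : Set V) : Prop :=
  G.IsClique C ∧ ∀ D : Set V, G.IsClique D → C ⊆ D → C = D

/-- Every vertex belongs to at most `N` (maximal) cliques. -/
def CliqueBound (G : SimpleGraph V) (N : ℕ) : Prop :=
  ∀ v : V, {C : Set V | IsMaxClique G C ∧ v ∈ C}.Finite ∧
    {C : Set V | IsMaxClique G C ∧ v ∈ C}.ncard ≤ N

/-- A cut-vertex: removing it disconnects the graph. -/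
def IsCutVertex (G : SimpleGraph V) (v : V) : Prop :=
  ¬ (G.induce {u : V | u ≠ v}).Connected

/-- Hausdorff distance between two sets of vertices, valued in `ℕ∞`. -/
noncomputable def hausDist (G : SimpleGraph V) (A B : Set V) : ℕ∞ :=
  max (⨆ a ∈ A, ⨅ b ∈ B, (G.dist a b : ℕ∞)) (⨆ b ∈ B, ⨅ a ∈ A, (G.dist a b : ℕ∞))

/-- `QC(γ)`: the supremum of Hausdorff distances between bi-infinite geodesics
contained in the convex hull of `γ`. -/
noncomputable def qc (G : SimpleGraph V) (γ : ℤ → V) : ℕ∞ :=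
  ⨆ (α : ℤ → V) (_ : IsBiGeodesic G α ∧ Set.range α ⊆ convexHullSet G (Set.range γ))
    (β : ℤ → V) (_ : IsBiGeodesic G β ∧ Set.range β ⊆ convexHullSet G (Set.range γ)),
    hausDist G (Set.range α) (Set.range β)

/-- `J` crosses the bi-infinite geodesic `γ`: it separates two of its vertices. -/
def Crosses (G : SimpleGraph V) (J : Set (Sym2 V)) (γ : ℤ → V) : Prop :=
  ∃ m n : ℤ, SepVerts G J (γ m) (γ n)

/-- `HQC(γ)`: the maximal size of two transverse collections of hyperplanes
crossing `γ`. -/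
noncomputable def hqc (G : SimpleGraph V) (γ : ℤ → V) : ℕ∞ :=
  sSup {n : ℕ∞ | ∃ H₁ H₂ : Finset (Set (Sym2 V)), (H₁.card : ℕ∞) = n ∧ (H₂.card : ℕ∞) = n ∧
    (∀ J ∈ H₁, IsHyperplane G J ∧ Crosses G J γ) ∧
    (∀ J ∈ H₂, IsHyperplane G J ∧ Crosses G J γ) ∧
    (∀ J ∈ H₁, ∀ K ∈ H₂, Transverse G J K)}

/-- Two hyperplanes are strongly separated if no hyperplane is transverse to both. -/
def StronglySeparated (G : SimpleGraph V) (A B : Set (Sym2 V)) : Prop :=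
  ∀ J : Set (Sym2 V), IsHyperplane G J → ¬ (Transverse G J A ∧ Transverse G J B)

/-- `J` separates the hyperplanes `A` and `B`: their carriers lie in distinct sectors. -/
def SepHyps (G : SimpleGraph V) (J A B : Set (Sym2 V)) : Prop :=
  SepSets G J (carrier A) (carrier B)

/-- `ss(A,B)`: the maximal number of pairwise strongly separated hyperplanes
separating `A` and `B`. -/
noncomputable def ssNum (G : SimpleGraph V) (A B : Set (Sym2 V)) : ℕ∞ :=
  sSup {n : ℕ∞ | ∃ F : Finset (Set (Sym2 V)), (F.card : ℕ∞) = n ∧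
    (∀ J ∈ F, IsHyperplane G J ∧ SepHyps G J A B) ∧
    (∀ J ∈ F, ∀ K ∈ F, J ≠ K → StronglySeparated G J K)}

/-- `δ`-hyperbolicity of a graph: every side of a geodesic triangle lies in the
`δ`-neighbourhood of the two other sides. -/
def GraphHyperbolic {W : Type*} (H : SimpleGraph W) (δ : ℝ) : Prop :=
  ∀ (a b c : W) (p : H.Walk a b) (q : H.Walk b c) (r : H.Walk a c),
    p.length = H.dist a b → q.length = H.dist b c → r.length = H.dist a c →
    ∀ v ∈ p.support, ∃ w : W, (w ∈ q.support ∨ w ∈ r.support) ∧ (H.dist v w : ℝ) ≤ δ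

/-- An inversion: an isometry stabilising a hyperplane and permuting its sectors
non-trivially. -/
def IsInversion (G : SimpleGraph V) (h : Equiv.Perm V) : Prop :=
  ∃ J : Set (Sym2 V), IsHyperplane G J ∧ Sym2.map h '' J = J ∧
    ∃ S : Set V, IsSector G J S ∧ h '' S ≠ S

/-- The bi-infinite path obtained by concatenating the `⟨g⟩`-translates of the
path `p`. -/
noncomputable def concatTranslates {G : SimpleGraph V} (g : Equiv.Perm V) {x y : V}
    (p : G.Walk x y) (n : ℤ) : V :=
  (g ^ (n / (p.length : ℤ))) (p.getVert (n % (p.length : ℤ)).toNat)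

/-! Gated sets are convex, and the gate in a gated set `Z` of a point `x` lies on a geodesic from
`x` to any point of `Z`. Hence if `x ∈ Y ∩ Zᵢ` with `Y` convex, its gate in `Zₙ` lies in `Y ∩ Zᵢ ∩ Zₙ`
as soon as `Y` and `Zᵢ` meet `Zₙ`. So `Y ∩ Zₙ` is again a convex set meeting each of
`Z₁, …, Zₙ₋₁`, and induction on `n` concludes. -/

section Gates

variable {G : SimpleGraph V}

lemma dist_add_dist_of_mem_support {x y v : V} (p : G.Walk x y)
    (hp : p.length = G.dist x y) (hv : v ∈ p.support) :
    G.dist x v + G.dist v y = G.dist x y := by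
  classical
  have hxv : G.dist x v ≤ (p.takeUntil v hv).length := SimpleGraph.dist_le _
  have hvy : G.dist v y ≤ (p.dropUntil v hv).length := SimpleGraph.dist_le _
  have hsplit : (p.takeUntil v hv).length + (p.dropUntil v hv).length = p.length := by
    rw [← SimpleGraph.Walk.length_append, p.take_spec hv]
  have htri : G.dist x y ≤ G.dist x v + G.dist v y :=
    (p.takeUntil v hv).reachable.dist_triangle_left y
  omega

lemma ConvexSet.inter {S T : Set V} (hS : ConvexSet G S) (hT : ConvexSet G T) :
    ConvexSet G (S ∩ T) :=
  fun x hx y hy p hp v hv => ⟨hS x hx.1 y hy.1 p hp v hv, hT x hx.2 y hy.2 p hp v hv⟩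

variable (hconn : G.Connected)
include hconn

lemma IsGate.mem_of_convexSet {S T : Set V} {x g a : V} (hg : IsGate G S x g) (ha : a ∈ S)
    (hT : ConvexSet G T) (hxT : x ∈ T) (haT : a ∈ T) : g ∈ T := by
  obtain ⟨p, hp⟩ := hconn.exists_walk_length_eq_dist x g
  obtain ⟨q, hq⟩ := hconn.exists_walk_length_eq_dist g a
  have hpq : (p.append q).length = G.dist x a := by
    rw [SimpleGraph.Walk.length_append, hp, hq, hg.2 a ha]
  exact hT x hxT a haT (p.append q) hpq g
    ((SimpleGraph.Walk.mem_support_append_iff _ _).2 (Or.inl p.end_mem_support))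

lemma Gated.convexSet {S : Set V} (hS : Gated G S) : ConvexSet G S := by
  intro x hx y hy p hp v hv
  obtain ⟨g, hgS, hg⟩ := hS v
  have hv_geod := dist_add_dist_of_mem_support p hp hv
  have hgx := hg x hx
  have hgy := hg y hy
  have htri : G.dist x y ≤ G.dist x g + G.dist g y := hconn.dist_triangle
  rw [SimpleGraph.dist_comm (u := x) (v := v)] at hv_geod
  rw [SimpleGraph.dist_comm (u := x) (v := g)] at htri
  have hvg : G.dist v g = 0 := by omega
  rwa [hconn.dist_eq_zero_iff.1 hvg]

lemma ConvexSet.inter_inter_nonempty_of_gated {Y Z Z' : Set V} (hY : ConvexSet G Y)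
    (hZ : Gated G Z) (hZ' : ConvexSet G Z') (hYZ : (Y ∩ Z).Nonempty)
    (hYZ' : (Y ∩ Z').Nonempty) (hZZ' : (Z ∩ Z').Nonempty) : (Y ∩ Z ∩ Z').Nonempty := by
  obtain ⟨x, hxY, hxZ'⟩ := hYZ'
  obtain ⟨g, hg⟩ := hZ x
  obtain ⟨a, haY, haZ⟩ := hYZ
  obtain ⟨b, hbZ, hbZ'⟩ := hZZ'
  exact ⟨g, ⟨hg.mem_of_convexSet hconn haZ hY hxY haY, hg.1⟩,
    hg.mem_of_convexSet hconn hbZ hZ' hxZ' hbZ'⟩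

theorem ConvexSet.inter_iInter_gated_nonempty {Y : Set V} (hY : ConvexSet G Y)
    (hYne : Y.Nonempty) {n : ℕ} {Z : Fin n → Set V} (hZ : ∀ i, Gated G (Z i))
    (hYZ : ∀ i, (Y ∩ Z i).Nonempty) (hZZ : Pairwise fun i j => (Z i ∩ Z j).Nonempty) :
    (Y ∩ ⋂ i, Z i).Nonempty := by
  induction n generalizing Y with
  | zero => simpa using hYne
  | succ n ih =>
    have hZlast := hZ (Fin.last n)
    have hY' : ConvexSet G (Y ∩ Z (Fin.last n)) := hY.inter (hZlast.convexSet hconn)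
    have hY'Z (i : Fin n) : (Y ∩ Z (Fin.last n) ∩ Z i.castSucc).Nonempty :=
      hY.inter_inter_nonempty_of_gated hconn hZlast ((hZ _).convexSet hconn)
        (hYZ _) (hYZ _) (hZZ (Fin.castSucc_lt_last i).ne')
    obtain ⟨w, ⟨hwY, hwlast⟩, hw⟩ := ih hY' (hYZ _) (fun i => hZ _) hY'Z
      (fun i j hij => hZZ (Fin.castSucc_injective n |>.ne hij))
    exact ⟨w, hwY, Set.mem_iInter.2 (Fin.forall_fin_succ'.2 ⟨Set.mem_iInter.1 hw, hwlast⟩)⟩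

end Gates

/-- Helly-type property: in a quasi-median graph, a convex subgraph
`Y` and gated subgraphs `Z₁, …, Zₙ` which pairwise intersect have a common point. -/
theorem helly_convex_gated
    {V : Type*} (G : SimpleGraph V) (hqm : IsQuasiMedian G)
    (Y : Set V) (hY : ConvexSet G Y) (hYne : Y.Nonempty)
    (n : ℕ) (Z : Fin n → Set V) (hZ : ∀ i, Gated G (Z i))
    (hYZ : ∀ i, (Y ∩ Z i).Nonempty)
    (hZZ : ∀ i j, i ≠ j → (Z i ∩ Z j).Nonempty) :
    (Y ∩ ⋂ i, Z i).Nonempty :=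
  hY.inter_iInter_gated_nonempty hqm.connected hYne hZ hYZ hZZ

end QM
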